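/- Let μ₁ and μ₂ be Borel probability measures on ℝ, and let U : L²(μ₁) → L²(μ₂) be a linear isometric bijection such that U(g·f) = g·U(f) for every f ∈ L²(μ₁) and every bounded Borel measurable function g : ℝ → ℂ. Then μ₁ and μ₂ are mutually absolutely continuous, and, setting h := U(1) ∈ L²(μ₂), one has U(f) = h·f (μ₂-almost everywhere) for every f ∈ L²(μ₁), and |h|² equals the Radon–Nikodym derivative dμ₁/dμ₂ μ₂-almost everywhere. -/

import Mathlib

/-!
Testing `U` on indicators gives `μ₁ s = ‖U 1ₛ‖² = ‖h 1ₛ‖² = ∫ₛ |h|² dμ₂`, so `μ₁ = |h|² μ₂`.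
Multiplication by `h` is then an isometry `L²(|h|² μ₂) → L²(μ₂)` that agrees with `U` on
indicators, hence everywhere, since simple functions are dense. Surjectivity of `U` forces
`h ≠ 0` `μ₂`-a.e., which gives `μ₂ ≪ |h|² μ₂ = μ₁`.
-/

open MeasureTheory

/-- The class of the constant function `1` in `L²(μ)`. -/
noncomputable def lpOne (μ : Measure ℝ) [IsFiniteMeasure μ] : Lp ℂ 2 μ :=
  MemLp.toLp (fun _ : ℝ => (1 : ℂ)) (memLp_const (1 : ℂ))

open scoped ENNReal

namespace MeasureTheory

variable {α 𝕜 E : Type*} [MeasurableSpace α] [NormedField 𝕜] [NormedAddCommGroup E]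
  [NormedSpace 𝕜 E] {p : ℝ≥0∞} {μ : Measure α} {H : α → 𝕜}

theorem smul_ae_eq_of_ae_eq_withDensity (hH : AEStronglyMeasurable H μ) {f g : α → E}
    (hfg : f =ᵐ[μ.withDensity fun x => ‖H x‖ₑ ^ p.toReal] g) : H • f =ᵐ[μ] H • g := by
  filter_upwards [(ae_withDensity_iff' (hH.enorm.pow_const _)).1 hfg] with x hx
  by_cases hHx : H x = 0
  · simp [hHx]
  · rw [Pi.smul_apply', Pi.smul_apply', hx (by simp [ENNReal.rpow_eq_zero_iff, hHx])]

theorem AEStronglyMeasurable.smul_of_withDensity (hH : AEStronglyMeasurable H μ) {f : α → E}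
    (hf : AEStronglyMeasurable f (μ.withDensity fun x => ‖H x‖ₑ ^ p.toReal)) :
    AEStronglyMeasurable (H • f) μ :=
  (hH.smul hf.stronglyMeasurable_mk.aestronglyMeasurable).congr
    (smul_ae_eq_of_ae_eq_withDensity hH hf.ae_eq_mk).symm

theorem eLpNorm_smul_eq_eLpNorm_withDensity (hp₀ : p ≠ 0) (hp : p ≠ ∞)
    (hH : AEStronglyMeasurable H μ) {f : α → E}
    (hf : AEStronglyMeasurable f (μ.withDensity fun x => ‖H x‖ₑ ^ p.toReal)) :
    eLpNorm (H • f) p μ = eLpNorm f p (μ.withDensity fun x => ‖H x‖ₑ ^ p.toReal) := by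
  rw [eLpNorm_eq_lintegral_rpow_enorm_toReal hp₀ hp, eLpNorm_eq_lintegral_rpow_enorm_toReal hp₀ hp,
    lintegral_withDensity_eq_lintegral_mul₀' (hH.enorm.pow_const _) (hf.enorm.pow_const _)]
  simp only [Pi.smul_apply', enorm_smul, Pi.mul_apply,
    ENNReal.mul_rpow_of_nonneg _ _ ENNReal.toReal_nonneg]

theorem memLp_smul_of_withDensity (hp₀ : p ≠ 0) (hp : p ≠ ∞) (hH : AEStronglyMeasurable H μ)
    {f : α → E} (hf : MemLp f p (μ.withDensity fun x => ‖H x‖ₑ ^ p.toReal)) :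
    MemLp (H • f) p μ :=
  ⟨hH.smul_of_withDensity hf.1, (eLpNorm_smul_eq_eLpNorm_withDensity hp₀ hp hH hf.1).trans_lt hf.2⟩

theorem eq_withDensity_of_eLpNorm_indicator_eq (hp₀ : p ≠ 0) (hp : p ≠ ∞)
    (hH : AEStronglyMeasurable H μ) {ν : Measure α}
    (h : ∀ s, MeasurableSet s → eLpNorm (s.indicator fun _ => (1 : 𝕜)) p ν =
      eLpNorm (H • s.indicator fun _ => (1 : 𝕜)) p μ) :
    ν = μ.withDensity fun x => ‖H x‖ₑ ^ p.toReal := by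
  ext s hs
  have hs' := h s hs
  rw [eLpNorm_smul_eq_eLpNorm_withDensity hp₀ hp hH (aestronglyMeasurable_const.indicator hs),
    eLpNorm_indicator_const hs hp₀ hp, eLpNorm_indicator_const hs hp₀ hp, enorm_one, one_mul,
    one_mul] at hs'
  exact ENNReal.rpow_left_injective (one_div_pos.2 (ENNReal.toReal_pos hp₀ hp)).ne' hs'

theorem ae_ne_zero_of_surjective [IsFiniteMeasure μ] [Nontrivial E] {ν : Measure α}
    (hH : AEStronglyMeasurable H μ) {T : Lp E p ν → Lp E p μ} (hT : Function.Surjective T)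
    (hTH : ∀ f, T f =ᵐ[μ] H • ⇑f) : ∀ᵐ x ∂μ, H x ≠ 0 := by
  obtain ⟨c, hc⟩ := exists_ne (0 : E)
  have hZ : MeasurableSet {x | hH.mk H x = 0} :=
    hH.stronglyMeasurable_mk.measurableSet_eq_fun stronglyMeasurable_const
  -- the indicator of `{H = 0}` is in the range of `T`, but everything in the range vanishes there
  obtain ⟨f, hf⟩ := hT (indicatorConstLp p hZ (measure_ne_top μ _) c)
  have hZ_null : ∀ᵐ x ∂μ, x ∉ {x | hH.mk H x = 0} := by
    filter_upwards [hTH f, indicatorConstLp_coeFn_mem (hs := hZ) (hμs := measure_ne_top μ _)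
      (c := c), hH.ae_eq_mk] with x hTx hcx hHx hxZ
    rw [hf] at hTx
    exact hc (by rw [← hcx hxZ, hTx, Pi.smul_apply', hHx, hxZ, zero_smul])
  filter_upwards [hZ_null, hH.ae_eq_mk] with x hx hHx
  rwa [hHx]

theorem absolutelyContinuous_withDensity_of_surjective [IsFiniteMeasure μ] [Nontrivial E]
    {ν : Measure α} (hH : AEStronglyMeasurable H μ) {T : Lp E p ν → Lp E p μ}
    (hT : Function.Surjective T) (hTH : ∀ f, T f =ᵐ[μ] H • ⇑f) :
    μ ≪ μ.withDensity fun x => ‖H x‖ₑ ^ p.toReal := by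
  refine withDensity_absolutelyContinuous' (hH.enorm.pow_const _) ?_
  filter_upwards [ae_ne_zero_of_surjective hH hT hTH] with x hx
  simp [hx]

variable [Fact (1 ≤ p)]

noncomputable def mulLp (hp : p ≠ ∞) (hH : AEStronglyMeasurable H μ) :
    Lp E p (μ.withDensity fun x => ‖H x‖ₑ ^ p.toReal) →ₗᵢ[𝕜] Lp E p μ where
  toFun f := (memLp_smul_of_withDensity (zero_lt_one.trans_le Fact.out).ne' hp hH
    (Lp.memLp f)).toLp _
  map_add' f g := by
    rw [← MemLp.toLp_add]
    refine MemLp.toLp_congr _ _ ?_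
    simpa only [smul_add] using smul_ae_eq_of_ae_eq_withDensity hH (Lp.coeFn_add f g)
  map_smul' c f := by
    rw [← MemLp.toLp_const_smul]
    refine MemLp.toLp_congr _ _ ?_
    simpa only [smul_comm _ c, RingHom.id_apply] using
      smul_ae_eq_of_ae_eq_withDensity hH (Lp.coeFn_smul c f)
  norm_map' f := by
    rw [LinearMap.coe_mk, AddHom.coe_mk, Lp.norm_toLp, Lp.norm_def,
      eLpNorm_smul_eq_eLpNorm_withDensity (zero_lt_one.trans_le Fact.out).ne' hp hH
      (Lp.aestronglyMeasurable f)]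

theorem coeFn_mulLp (hp : p ≠ ∞) (hH : AEStronglyMeasurable H μ)
    (f : Lp E p (μ.withDensity fun x => ‖H x‖ₑ ^ p.toReal)) :
    mulLp hp hH f =ᵐ[μ] H • ⇑f :=
  MemLp.coeFn_toLp
    (memLp_smul_of_withDensity (zero_lt_one.trans_le Fact.out).ne' hp hH (Lp.memLp f))

theorem ae_eq_smul_of_indicatorConstLp (hp : p ≠ ∞) (hH : AEStronglyMeasurable H μ)
    {ν : Measure α} (hν : ν = μ.withDensity fun x => ‖H x‖ₑ ^ p.toReal)
    (T : Lp E p ν →L[𝕜] Lp E p μ)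
    (hT : ∀ (c : E) {s : Set α} (hs : MeasurableSet s) (hνs : ν s < ∞),
      T (indicatorConstLp p hs hνs.ne c) =ᵐ[μ] H • s.indicator fun _ => c)
    (f : Lp E p ν) : T f =ᵐ[μ] H • ⇑f := by
  subst hν
  have hT_eq : ∀ f, T f = mulLp hp hH f := by
    refine Lp.induction hp _ (fun c s hs hνs => ?_) (fun f g _ _ _ hf hg => ?_) ?_
    · rw [Lp.simpleFunc.coe_indicatorConst]
      refine Lp.ext ((hT c hs hνs).trans ?_)
      exact (smul_ae_eq_of_ae_eq_withDensity hH indicatorConstLp_coeFn).symm.trans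
        (coeFn_mulLp hp hH _).symm
    · rw [map_add, map_add, hf, hg]
    · exact isClosed_eq T.continuous (mulLp hp hH).continuous
  rw [hT_eq]
  exact coeFn_mulLp hp hH f

end MeasureTheory

theorem coeFn_lpOne (μ : Measure ℝ) [IsFiniteMeasure μ] : lpOne μ =ᵐ[μ] 1 :=
  MemLp.coeFn_toLp _

/-- Measure-theoretic core of the first part of Theorem 8.2 of the paper: a unitary
`U : L²(μ₁) → L²(μ₂)` commuting with multiplication by all bounded Borel functions forces
the measures to be mutually absolutely continuous, `U` to be multiplication by
`h := U(1)`, and `|h|²` to be the Radon–Nikodym derivative `dμ₁/dμ₂`. -/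
theorem stmt9 (μ₁ μ₂ : Measure ℝ) [IsProbabilityMeasure μ₁] [IsProbabilityMeasure μ₂]
    (U : Lp ℂ 2 μ₁ ≃ₗᵢ[ℂ] Lp ℂ 2 μ₂)
    (hU : ∀ g : ℝ → ℂ, Measurable g → (∃ C : ℝ, ∀ x : ℝ, ‖g x‖ ≤ C) →
      ∀ f gf : Lp ℂ 2 μ₁, ((gf : ℝ → ℂ) =ᵐ[μ₁] fun x : ℝ => g x * f x) →
        ((U gf : ℝ → ℂ) =ᵐ[μ₂] fun x : ℝ => g x * (U f : ℝ → ℂ) x)) :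
    μ₁ ≪ μ₂ ∧ μ₂ ≪ μ₁ ∧
    (∀ f : Lp ℂ 2 μ₁,
      (U f : ℝ → ℂ) =ᵐ[μ₂] fun x : ℝ => (U (lpOne μ₁) : ℝ → ℂ) x * (f : ℝ → ℂ) x) ∧
    (fun x : ℝ => ‖(U (lpOne μ₁) : ℝ → ℂ) x‖ ^ 2)
      =ᵐ[μ₂] fun x : ℝ => (μ₁.rnDeriv μ₂ x).toReal := by
  set h := U (lpOne μ₁)
  have hh : AEStronglyMeasurable h μ₂ := Lp.aestronglyMeasurable h
  have hU_ind : ∀ (c : ℂ) {s : Set ℝ} (hs : MeasurableSet s) (hμs : μ₁ s < ∞),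
      U (indicatorConstLp 2 hs hμs.ne c) =ᵐ[μ₂] ⇑h • s.indicator fun _ => c := by
    intro c s hs hμs
    have hg := hU _ (measurable_const.indicator hs) ⟨‖c‖, norm_indicator_le_norm_self fun _ => c⟩
      (lpOne μ₁) (indicatorConstLp 2 hs hμs.ne c) <| by
        filter_upwards [indicatorConstLp_coeFn (hs := hs) (hμs := hμs.ne) (c := c),
          coeFn_lpOne μ₁] with x hx hx1
        rw [hx, hx1, Pi.one_apply, mul_one]
    filter_upwards [hg] with x hx
    rw [hx, mul_comm]
    rfl
  have hμ₁ : μ₁ = μ₂.withDensity fun x => ‖h x‖ₑ ^ (2 : ℝ≥0∞).toReal :=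
    eq_withDensity_of_eLpNorm_indicator_eq two_ne_zero ENNReal.ofNat_ne_top hh fun s hs => by
      rw [← eLpNorm_congr_ae (hU_ind 1 hs (measure_lt_top μ₁ s)), ← Lp.enorm_def, U.enorm_map,
        Lp.enorm_def, eLpNorm_congr_ae indicatorConstLp_coeFn]
  have hUf : ∀ f, U f =ᵐ[μ₂] ⇑h • ⇑f :=
    ae_eq_smul_of_indicatorConstLp ENNReal.ofNat_ne_top hh hμ₁
      U.toLinearIsometry.toContinuousLinearMap hU_ind
  have hrn : μ₁.rnDeriv μ₂ =ᵐ[μ₂] fun x => ‖h x‖ₑ ^ (2 : ℝ≥0∞).toReal := by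
    rw [hμ₁]
    exact Measure.rnDeriv_withDensity₀ _ (hh.enorm.pow_const _)
  refine ⟨hμ₁ ▸ withDensity_absolutelyContinuous _ _,
    hμ₁ ▸ absolutelyContinuous_withDensity_of_surjective hh U.surjective hUf, hUf, ?_⟩
  filter_upwards [hrn] with x hx
  simp [hx]
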